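/- arXiv:1204.4714 — 8 statements merged into one kernel-verified Lean document; each statement's English description precedes it below -/
import Mathlib

section
/- Let R₁, R₂ ⊆ ℝ² be disjoint convex sets, let p₁ ∈ R₁ and p₂ ∈ R₂, let u ∈ ℝ², and let t₁, t₂ ≥ 0 be real numbers. Then it cannot happen that both p₁ + t₁·u ∈ R₂ and p₂ + t₂·u ∈ R₁. In other words, two disjoint convex sets in the plane cannot each contain a point of a forward ray, in the same direction u, emanating from a point of the other. -/
/- With `qᵢ = pᵢ + tᵢ • u`, the point `(t₂ • p₁ + t₁ • q₂) / (t₁ + t₂) = (t₁ • p₂ + t₂ • q₁) / (t₁ + t₂)`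
lies on both segments `[p₁, q₂] ⊆ R₁` and `[p₂, q₁] ⊆ R₂`. -/

theorem segment_inter_segment_add_smul_nonempty {𝕜 E : Type*} [Field 𝕜] [LinearOrder 𝕜]
    [IsStrictOrderedRing 𝕜] [AddCommGroup E] [Module 𝕜 E] (p₁ p₂ u : E) {t₁ t₂ : 𝕜}
    (ht₁ : 0 ≤ t₁) (ht₂ : 0 ≤ t₂) :
    (segment 𝕜 p₁ (p₂ + t₂ • u) ∩ segment 𝕜 p₂ (p₁ + t₁ • u)).Nonempty := by
  rcases (add_nonneg ht₁ ht₂).eq_or_lt with hsum | hsum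
  · obtain ⟨rfl, rfl⟩ : t₁ = 0 ∧ t₂ = 0 := ⟨by linarith, by linarith⟩
    exact ⟨p₁, left_mem_segment 𝕜 _ _, by simpa using right_mem_segment 𝕜 p₂ p₁⟩
  · have hsum_ne : t₁ + t₂ ≠ 0 := hsum.ne'
    refine ⟨(t₂ / (t₁ + t₂)) • p₁ + (t₁ / (t₁ + t₂)) • (p₂ + t₂ • u),
      ⟨_, _, by positivity, by positivity, by field_simp; ring, rfl⟩,
      ⟨t₁ / (t₁ + t₂), t₂ / (t₁ + t₂), by positivity, by positivity, by field_simp, ?_⟩⟩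
    module

/-- Two disjoint convex sets in the plane cannot each contain a point of a forward ray,
in the same direction `u`, emanating from a point of the other. -/
theorem disjoint_convex_no_mutual_forward_rays
    (R₁ R₂ : Set (EuclideanSpace ℝ (Fin 2)))
    (hconv₁ : Convex ℝ R₁) (hconv₂ : Convex ℝ R₂) (hdisj : Disjoint R₁ R₂)
    (p₁ p₂ u : EuclideanSpace ℝ (Fin 2)) (hp₁ : p₁ ∈ R₁) (hp₂ : p₂ ∈ R₂)
    (t₁ t₂ : ℝ) (ht₁ : 0 ≤ t₁) (ht₂ : 0 ≤ t₂) :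
    ¬ (p₁ + t₁ • u ∈ R₂ ∧ p₂ + t₂ • u ∈ R₁) := by
  rintro ⟨hq₁, hq₂⟩
  obtain ⟨x, hx₁, hx₂⟩ := segment_inter_segment_add_smul_nonempty p₁ p₂ u ht₁ ht₂
  exact hdisj.ne_of_mem (hconv₁.segment_subset hp₁ hq₂ hx₁) (hconv₂.segment_subset hp₂ hq₁ hx₂) rfl
end

section
/- Let β ≥ 1 be a real number and set φ = 2π/(13β). Let r > 0, let m, c, x ∈ ℝ² with ‖x − c‖ ≤ r/2 and ‖m − c‖ ≤ β·r, and let u ∈ ℝ² be a unit vector such that the (undirected) angle between u and m − c is at most φ. Then there exists t ≥ 0 with ‖(x + t·u) − m‖ ≤ r; that is, the ray from x in direction u meets the closed disk of radius r centered at m. -/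
open InnerProductGeometry Real
open scoped RealInnerProductSpace

/-!
Take `t = ⟪u, m - c⟫`, the parameter of the foot of the perpendicular from `m` to the line
`c + ℝ u`. It is nonnegative because the angle `θ` between `u` and `m - c` is below `π / 2`, and
that foot lies at distance `sin θ ‖m - c‖ ≤ φ β r = 2π r / 13` from `m`. Starting the ray at `x`
instead of `c` moves the point by at most `r / 2`, and `2π / 13 + 1 / 2 < 1`.
-/

section InnerProductSpace

variable {V : Type*} [NormedAddCommGroup V] [InnerProductSpace ℝ V]

theorem inner_nonneg_of_angle_le_pi_div_two {x y : V} (h : angle x y ≤ π / 2) : 0 ≤ ⟪x, y⟫ := by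
  rw [← cos_angle_mul_norm_mul_norm]
  have hcos : 0 ≤ cos (angle x y) :=
    cos_nonneg_of_mem_Icc ⟨by linarith [angle_nonneg x y, pi_pos], h⟩
  positivity

theorem norm_sub_inner_smul_eq_sin_angle_mul_norm {u v : V} (hu : ‖u‖ = 1) :
    ‖v - ⟪u, v⟫ • u‖ = sin (angle u v) * ‖v‖ := by
  have hcos : cos (angle u v) * ‖v‖ = ⟪u, v⟫ := by
    simpa [hu] using cos_angle_mul_norm_mul_norm u v
  have hsq : ‖v - ⟪u, v⟫ • u‖ ^ 2 = ‖v‖ ^ 2 - ⟪u, v⟫ ^ 2 := by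
    rw [norm_sub_sq_real, real_inner_smul_right, real_inner_comm, norm_smul, hu,
      norm_eq_abs, mul_one, sq_abs]
    ring
  refine (sq_eq_sq₀ (norm_nonneg _) (mul_nonneg (sin_angle_nonneg u v) (norm_nonneg v))).1 ?_
  rw [hsq, ← hcos]
  linear_combination -‖v‖ ^ 2 * sin_sq_add_cos_sq (angle u v)

theorem norm_sub_inner_smul_le_angle_mul_norm {u v : V} (hu : ‖u‖ = 1) :
    ‖v - ⟪u, v⟫ • u‖ ≤ angle u v * ‖v‖ := by
  rw [norm_sub_inner_smul_eq_sin_angle_mul_norm hu]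
  gcongr
  exact sin_le (angle_nonneg u v)

theorem norm_add_inner_smul_sub_le {x c m u : V} (hu : ‖u‖ = 1) :
    ‖x + ⟪u, m - c⟫ • u - m‖ ≤ ‖x - c‖ + angle u (m - c) * ‖m - c‖ :=
  calc ‖x + ⟪u, m - c⟫ • u - m‖ = ‖(x - c) - ((m - c) - ⟪u, m - c⟫ • u)‖ := by
        congr 1; abel
    _ ≤ ‖x - c‖ + ‖(m - c) - ⟪u, m - c⟫ • u‖ := norm_sub_le _ _
    _ ≤ ‖x - c‖ + angle u (m - c) * ‖m - c‖ := by
        gcongr; exact norm_sub_inner_smul_le_angle_mul_norm hu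

end InnerProductSpace

theorem ray_meets_inscribed_disk_general
    (β : ℝ) (hβ : 1 ≤ β) (r : ℝ)
    (m c x u : EuclideanSpace ℝ (Fin 2))
    (hx : ‖x - c‖ ≤ r / 2) (hm : ‖m - c‖ ≤ β * r)
    (hu : ‖u‖ = 1)
    (hangle : InnerProductGeometry.angle u (m - c) ≤ 2 * π / (13 * β)) :
    ∃ t : ℝ, 0 ≤ t ∧ ‖(x + t • u) - m‖ ≤ r := by
  have hr : 0 ≤ r := by linarith [norm_nonneg (x - c)]
  have hφ : 2 * π / (13 * β) ≤ π / 2 := by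
    rw [div_le_div_iff₀ (by positivity) two_pos]
    nlinarith [pi_pos]
  refine ⟨⟪u, m - c⟫, inner_nonneg_of_angle_le_pi_div_two (hangle.trans hφ), ?_⟩
  calc ‖x + ⟪u, m - c⟫ • u - m‖ ≤ ‖x - c‖ + angle u (m - c) * ‖m - c‖ :=
        norm_add_inner_smul_sub_le hu
    _ ≤ r / 2 + 2 * π / (13 * β) * (β * r) := by gcongr
    _ = r / 2 + 2 * π / 13 * r := by field_simp
    _ ≤ r := by nlinarith [pi_lt_d2]

/-- Paper's Claim (cla:lines): with wedge opening angle `φ = 2π/(13β)`, every ray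
starting near the marked cell (center `c`, with `‖x - c‖ ≤ r/2`) in a unit direction `u`
making angle at most `φ` with `m - c` (where `‖m - c‖ ≤ β·r`) meets the closed disk of
radius `r` centered at `m`. -/
theorem ray_meets_inscribed_disk
    (β : ℝ) (hβ : 1 ≤ β) (r : ℝ) (hr : 0 < r)
    (m c x u : EuclideanSpace ℝ (Fin 2))
    (hx : ‖x - c‖ ≤ r / 2) (hm : ‖m - c‖ ≤ β * r)
    (hu : ‖u‖ = 1)
    (hangle : InnerProductGeometry.angle u (m - c) ≤ 2 * π / (13 * β)) :
    ∃ t : ℝ, 0 ≤ t ∧ ‖(x + t • u) - m‖ ≤ r :=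
  ray_meets_inscribed_disk_general β hβ r m c x u hx hm hu hangle
end

section
/- There exists a constant c > 0 such that the following holds for every real β ≥ 1. Let R ⊆ ℝ² be a compact convex set, and suppose B(m,r) with r > 0 is a maximal inscribed disk of R, i.e., B(m,r) ⊆ R and every closed disk contained in R has radius at most r. If the diameter of R is at most 2βr, then there exists a finite set S ⊆ ℝ² with |S| ≤ c·β such that R ⊆ ⋃_{p ∈ S} B(p, r). -/
/-!
Let `a, b ∈ R` realise the diameter `D` of `R`, and move them to `0` and `D` in `ℂ` by an
isometry, so that `R` lies in the lens `‖z‖ ≤ D`, `‖z - D‖ ≤ D`. For `z ∈ R` the triangle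
`0, D, z` lies in `R` and contains the disk of radius `|Im z| / 6` about its centroid, so the
maximality of `r` gives `|Im z| ≤ 6r`. Hence `R` lies in the rectangle `[0, D] × [-6r, 6r]`,
which a grid of `(⌊D / r⌋ + 1) · 13` disks of radius `r` covers, and `D ≤ 2βr` bounds this
by `39β`.
-/

open Metric Set Complex Module

theorem Convex.smul_add_smul_mem_of_zero_mem {E : Type*} [AddCommGroup E] [Module ℝ E]
    {s : Set E} (hs : Convex ℝ s) (h0 : (0 : E) ∈ s) {x y : E} (hx : x ∈ s) (hy : y ∈ s)
    {a b : ℝ} (ha : 0 ≤ a) (hb : 0 ≤ b) (hab : a + b ≤ 1) : a • x + b • y ∈ s := by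
  obtain ⟨z, hz, hxy⟩ := hs.exists_mem_add_smul_eq hx hy ha hb
  rw [← hxy]
  exact hs.smul_mem_of_zero_mem h0 hz ⟨add_nonneg ha hb, hab⟩

theorem IsCompact.exists_dist_eq_diam {X : Type*} [PseudoMetricSpace X] {s : Set X}
    (hs : IsCompact s) (hne : s.Nonempty) : ∃ a ∈ s, ∃ b ∈ s, dist a b = diam s := by
  obtain ⟨⟨a, b⟩, ⟨ha, hb⟩, hmax⟩ :=
    (hs.prod hs).exists_isMaxOn (hne.prod hne) continuous_dist.continuousOn
  exact ⟨a, ha, b, hb, le_antisymm (dist_le_diam_of_mem hs.isBounded ha hb)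
    (diam_le_of_forall_dist_le dist_nonneg fun p hp q hq => hmax (mk_mem_prod hp hq))⟩

theorem Real.exists_finset_cover_Icc (x₀ x₁ : ℝ) {δ : ℝ} (hδ : 0 < δ) :
    ∃ T : Finset ℝ, T.card ≤ ⌊(x₁ - x₀) / δ⌋₊ + 1 ∧ ∀ x ∈ Icc x₀ x₁, ∃ c ∈ T, |x - c| ≤ δ / 2 := by
  classical
  refine ⟨(Finset.range (⌊(x₁ - x₀) / δ⌋₊ + 1)).image fun i : ℕ => x₀ + i * δ + δ / 2,
    Finset.card_image_le.trans (Finset.card_range _).le, fun x ⟨hx₀, hx₁⟩ => ?_⟩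
  set i := ⌊(x - x₀) / δ⌋₊
  have hi : (i : ℝ) * δ ≤ x - x₀ := (le_div_iff₀ hδ).1 (Nat.floor_le (by bound))
  have hi' : x - x₀ < (i + 1) * δ := (div_lt_iff₀ hδ).1 (Nat.lt_floor_add_one _)
  refine ⟨x₀ + i * δ + δ / 2, Finset.mem_image_of_mem _ ?_, abs_le.2 ⟨by linarith, by linarith⟩⟩
  exact Finset.mem_range_succ_iff.2 (Nat.floor_le_floor (by gcongr))

theorem Complex.exists_finset_cover_reProdIm (x₀ x₁ y₀ y₁ : ℝ) {r : ℝ} (hr : 0 < r) :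
    ∃ S : Finset ℂ, S.card ≤ (⌊(x₁ - x₀) / r⌋₊ + 1) * (⌊(y₁ - y₀) / r⌋₊ + 1) ∧
      Icc x₀ x₁ ×ℂ Icc y₀ y₁ ⊆ ⋃ p ∈ S, closedBall p r := by
  classical
  obtain ⟨T₁, hT₁, hx⟩ := Real.exists_finset_cover_Icc x₀ x₁ hr
  obtain ⟨T₂, hT₂, hy⟩ := Real.exists_finset_cover_Icc y₀ y₁ hr
  refine ⟨(T₁ ×ˢ T₂).image fun c : ℝ × ℝ => (⟨c.1, c.2⟩ : ℂ), ?_, fun z ⟨hzre, hzim⟩ => ?_⟩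
  · exact Finset.card_image_le.trans (Finset.card_product T₁ T₂ ▸ Nat.mul_le_mul hT₁ hT₂)
  obtain ⟨c₁, hc₁, h₁⟩ := hx _ hzre
  obtain ⟨c₂, hc₂, h₂⟩ := hy _ hzim
  refine mem_iUnion₂.2 ⟨⟨c₁, c₂⟩,
    Finset.mem_image.2 ⟨(c₁, c₂), Finset.mem_product.2 ⟨hc₁, hc₂⟩, rfl⟩, ?_⟩
  calc dist z ⟨c₁, c₂⟩ ≤ |z.re - c₁| + |z.im - c₂| := by
        simpa [dist_eq] using norm_le_abs_re_add_abs_im (z - ⟨c₁, c₂⟩)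
    _ ≤ r := by linarith

theorem Complex.re_nonneg_of_norm_sub_le {z : ℂ} {D : ℝ} (h : ‖z - D‖ ≤ D) : 0 ≤ z.re := by
  have := (abs_re_le_norm (z - D)).trans h
  rw [sub_re, ofReal_re] at this
  linarith [(abs_le.1 this).1]

theorem Complex.closedBall_subset_convexHull_of_lens {D : ℝ} (hD : 0 < D) {z : ℂ}
    (hz : ‖z‖ ≤ D) (hzD : ‖z - D‖ ≤ D) :
    closedBall ((D + z) / 3) (|z.im| / 6) ⊆ convexHull ℝ {0, (D : ℂ), z} := by
  intro w hw
  set v := w - (D + z) / 3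
  have hv : ‖v‖ ≤ |z.im| / 6 := by rwa [← dist_eq]
  have hvre : |v.re| ≤ D / 6 := by linarith [abs_re_le_norm v, abs_im_le_norm z]
  set u := v.im / z.im
  have hvim : v.im = u * z.im :=
    (div_mul_cancel_of_imp fun h => by simpa [h] using (abs_im_le_norm v).trans hv).symm
  have hu : |u| ≤ 1 / 6 := by
    rw [abs_div]
    exact div_le_of_le_mul₀ (abs_nonneg _) (by norm_num) (by linarith [abs_im_le_norm v])
  have hzre : 0 ≤ z.re ∧ z.re ≤ D := ⟨re_nonneg_of_norm_sub_le hzD, (re_le_norm z).trans hz⟩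
  have huz : |u * z.re| ≤ D / 6 := by
    rw [abs_mul, abs_of_nonneg hzre.1]; nlinarith [abs_nonneg u]
  have huz' : |u * (D - z.re)| ≤ D / 6 := by
    rw [abs_mul, abs_of_nonneg (sub_nonneg.2 hzre.2)]; nlinarith [abs_nonneg u]
  set s := 1 / 3 + (v.re - u * z.re) / D with hs
  set t := 1 / 3 + u with ht
  have hw : w = s • (D : ℂ) + t • z := by
    have hw' : w = (D + z) / 3 + v := by ring
    apply Complex.ext <;> simp [hw', s, t, hvim] <;> field_simp; ring
  have h0 : (0 : ℂ) ∈ convexHull ℝ {0, (D : ℂ), z} := subset_convexHull ℝ _ (by simp)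
  rw [hw]
  refine (convex_convexHull ℝ _).smul_add_smul_mem_of_zero_mem h0
    (subset_convexHull ℝ _ (by simp)) (subset_convexHull ℝ _ (by simp)) ?_ ?_ ?_
  · linarith [(le_div_iff₀ hD).2 (by linarith [abs_le.1 hvre, abs_le.1 huz] :
      -(1 / 3) * D ≤ v.re - u * z.re), hs]
  · linarith [abs_le.1 hu, ht]
  · linarith [(div_le_iff₀ hD).2 (by linarith [abs_le.1 hvre, abs_le.1 huz'] :
      v.re - u * z.re ≤ (1 / 3 - u) * D), hs, ht]

theorem Complex.exists_finset_cover_of_lens {R : Set ℂ} (hR : Convex ℝ R) {D r : ℝ} (hD : 0 < D)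
    (hr : 0 < r) (h0 : 0 ∈ R) (hDR : (D : ℂ) ∈ R) (hlens : ∀ z ∈ R, ‖z‖ ≤ D ∧ ‖z - D‖ ≤ D)
    (hmax : ∀ c ρ, closedBall c ρ ⊆ R → ρ ≤ r) :
    ∃ S : Finset ℂ, S.card ≤ (⌊D / r⌋₊ + 1) * 13 ∧ R ⊆ ⋃ p ∈ S, closedBall p r := by
  obtain ⟨S, hS, hcover⟩ := exists_finset_cover_reProdIm 0 D (-(6 * r)) (6 * r) hr
  have h12 : ⌊(6 * r - -(6 * r)) / r⌋₊ = 12 := by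
    rw [show (6 * r - -(6 * r)) / r = 12 by field_simp; ring]; simp
  refine ⟨S, by rwa [h12, sub_zero] at hS, fun z hz => hcover ⟨?_, ?_⟩⟩
  · exact ⟨re_nonneg_of_norm_sub_le (hlens z hz).2, (re_le_norm z).trans (hlens z hz).1⟩
  · have hwidth := hmax _ _ ((closedBall_subset_convexHull_of_lens hD (hlens z hz).1
      (hlens z hz).2).trans (convexHull_min (by simp [insert_subset_iff, h0, hDR, hz]) hR))
    exact abs_le.1 (by linarith)

section Plane

variable {F : Type*} [NormedAddCommGroup F] [InnerProductSpace ℝ F]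

theorem exists_affineIsometryEquiv_complex (hF : finrank ℝ F = 2) (a b : F) :
    ∃ e : F ≃ᵃⁱ[ℝ] ℂ, e a = 0 ∧ e b = dist a b := by
  have : FiniteDimensional ℝ F := .of_finrank_pos (by omega)
  let T : F ≃ₗᵢ[ℝ] ℂ :=
    (isometryOfOrthonormal ((stdOrthonormalBasis ℝ F).reindex (finCongr hF))).symm
  refine ⟨(AffineIsometryEquiv.vaddConst ℝ a).symm.trans
    (T.trans (rotation (Circle.exp (-arg (T (b - a)))))).toAffineIsometryEquiv, by simp, ?_⟩
  set w := T (b - a)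
  calc exp (↑(-w.arg) * I) * w = exp (↑(-w.arg) * I) * (‖w‖ * exp (w.arg * I)) := by
        rw [norm_mul_exp_arg_mul_I]
    _ = ‖w‖ := by rw [mul_left_comm, ← Complex.exp_add]; push_cast; ring_nf; simp
    _ = dist a b := by rw [T.norm_map, dist_comm, dist_eq_norm]

theorem exists_finset_cover_of_maximal_inscribed (hF : finrank ℝ F = 2) {R : Set F}
    (hRc : IsCompact R) (hRconv : Convex ℝ R) {m : F} {r : ℝ} (hr : 0 < r)
    (hball : closedBall m r ⊆ R) (hmax : ∀ c ρ, closedBall c ρ ⊆ R → ρ ≤ r) :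
    ∃ S : Finset F, S.card ≤ (⌊diam R / r⌋₊ + 1) * 13 ∧ R ⊆ ⋃ p ∈ S, closedBall p r := by
  classical
  have : Nontrivial F := nontrivial_of_finrank_pos (R := ℝ) (by omega)
  have hD : 0 < diam R := calc
    0 < 2 * r := by positivity
    _ = diam (closedBall m r) := (diam_closedBall_eq m hr.le).symm
    _ ≤ diam R := diam_mono hball hRc.isBounded
  obtain ⟨a, ha, b, hb, hab⟩ := hRc.exists_dist_eq_diam ⟨m, hball (mem_closedBall_self hr.le)⟩
  obtain ⟨e, hea, heb⟩ := exists_affineIsometryEquiv_complex hF a b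
  rw [hab] at heb
  have hlens : ∀ z ∈ e '' R, ‖z‖ ≤ diam R ∧ ‖z - diam R‖ ≤ diam R := by
    rintro _ ⟨p, hp, rfl⟩
    rw [← dist_zero_right, ← dist_eq_norm, ← hea, ← heb, e.dist_map, e.dist_map]
    exact ⟨dist_le_diam_of_mem hRc.isBounded hp ha, dist_le_diam_of_mem hRc.isBounded hp hb⟩
  have hmax' : ∀ c ρ, closedBall c ρ ⊆ e '' R → ρ ≤ r := fun c ρ h => by
    refine hmax (e.symm c) ρ fun x hx => e.injective.mem_set_image.1 (h ?_)
    rwa [mem_closedBall, ← e.apply_symm_apply c, e.dist_map]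
  obtain ⟨S, hS, hcover⟩ := exists_finset_cover_of_lens (hRconv.affine_image e.toAffineMap)
    hD hr ⟨a, ha, hea⟩ ⟨b, hb, heb⟩ hlens hmax'
  refine ⟨S.image e.symm, Finset.card_image_le.trans hS, fun p hp => ?_⟩
  obtain ⟨c, hc, hpc⟩ := mem_iUnion₂.1 (hcover ⟨p, hp, rfl⟩)
  refine mem_iUnion₂.2 ⟨e.symm c, Finset.mem_image_of_mem _ hc, ?_⟩
  rwa [mem_closedBall, ← e.dist_map, e.apply_symm_apply]

end Plane

/-- Paper's Lemma 4.2 (geometric content): there is a universal constant `c > 0` such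
that any compact convex region `R ⊆ ℝ²` whose maximal inscribed disk is `B(m, r)` and
whose diameter is at most `2βr` (for `β ≥ 1`) can be covered by at most `c·β` disks of
radius `r`. -/
theorem thick_convex_cover_by_disks :
    ∃ c : ℝ, 0 < c ∧
      ∀ (β : ℝ), 1 ≤ β →
        ∀ (R : Set (EuclideanSpace ℝ (Fin 2))), IsCompact R → Convex ℝ R →
          ∀ (m : EuclideanSpace ℝ (Fin 2)) (r : ℝ), 0 < r →
            Metric.closedBall m r ⊆ R →
            (∀ (m' : EuclideanSpace ℝ (Fin 2)) (r' : ℝ),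
              Metric.closedBall m' r' ⊆ R → r' ≤ r) →
            Metric.diam R ≤ 2 * β * r →
            ∃ S : Finset (EuclideanSpace ℝ (Fin 2)),
              (S.card : ℝ) ≤ c * β ∧ R ⊆ ⋃ p ∈ S, Metric.closedBall p r := by
  refine ⟨39, by norm_num, fun β hβ R hRc hRconv m r hr hball hmax hdiam => ?_⟩
  obtain ⟨S, hS, hcover⟩ :=
    exists_finset_cover_of_maximal_inscribed finrank_euclideanSpace_fin hRc hRconv hr hball hmax
  have hfloor : (⌊diam R / r⌋₊ : ℝ) ≤ 2 * β :=
    (Nat.floor_le (by positivity)).trans ((div_le_iff₀ hr).2 hdiam)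
  refine ⟨S, ?_, hcover⟩
  calc (S.card : ℝ) ≤ (⌊diam R / r⌋₊ + 1) * 13 := by exact_mod_cast hS
    _ ≤ 39 * β := by linarith
end

section
/- Let R ⊆ ℝ² be a compact convex set and suppose B(m,r) with r > 0 is a maximal inscribed disk of R, i.e., B(m,r) ⊆ R and every closed disk contained in R has radius at most r. Then the set of contact points K = {x : ‖x − m‖ = r and x ∈ frontier(R)} is not contained in any open half-circle: for every unit vector v ∈ ℝ² there exists x ∈ K with ⟨x − m, v⟩ ≤ 0. -/
open scoped RealInnerProductSpace
open Metric

private lemma closedBall_subset_of_sphere_subset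
    {E : Type*} [NormedAddCommGroup E] [NormedSpace ℝ E]
    {s : Set E} (hs : Convex ℝ s)
    {c : E} {r : ℝ} (hc : c ∈ s) (hsph : Metric.sphere c r ⊆ s) :
    Metric.closedBall c r ⊆ s := by
  intro x hx
  rcases eq_or_ne x c with h | h
  · simpa [h] using hc
  · have hxc : 0 < ‖x - c‖ := by rwa [norm_pos_iff, sub_ne_zero]
    have hxr : ‖x - c‖ ≤ r := by simpa [mem_closedBall, dist_eq_norm] using hx
    have hr : 0 < r := lt_of_lt_of_le hxc hxr
    set p := c + (r / ‖x - c‖) • (x - c) with hp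
    have hps : p ∈ Metric.sphere c r := by
      simp only [hp, mem_sphere_iff_norm, add_sub_cancel_left, norm_smul,
        Real.norm_eq_abs, abs_of_nonneg (div_nonneg hr.le hxc.le)]
      field_simp
    have key : (‖x - c‖ / r) * (r / ‖x - c‖) = 1 := by field_simp
    have ht0 : (0:ℝ) ≤ ‖x - c‖ / r := div_nonneg hxc.le hr.le
    have ht1 : ‖x - c‖ / r ≤ 1 := by rw [div_le_one hr]; exact hxr
    have hmem := hs hc (hsph hps) (sub_nonneg.2 ht1) ht0 (by ring)
    have : (1 - ‖x - c‖ / r) • c + (‖x - c‖ / r) • p = x := by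
      rw [hp, smul_add, smul_smul, key, one_smul, sub_smul, one_smul]
      abel
    rwa [this] at hmem

set_option maxHeartbeats 1000000 in
/-- The contact points of a maximal inscribed disk of a compact convex planar region are
not contained in any open half-circle: for every unit vector `v` there is a contact
point `x` with `⟪x - m, v⟫ ≤ 0`. -/
theorem maximal_inscribed_disk_contacts_not_in_open_halfcircle
    (R : Set (EuclideanSpace ℝ (Fin 2))) (hR : IsCompact R) (hconv : Convex ℝ R)
    (m : EuclideanSpace ℝ (Fin 2)) (r : ℝ) (hr : 0 < r)
    (hsub : Metric.closedBall m r ⊆ R)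
    (hmax : ∀ (m' : EuclideanSpace ℝ (Fin 2)) (r' : ℝ),
      Metric.closedBall m' r' ⊆ R → r' ≤ r) :
    ∀ v : EuclideanSpace ℝ (Fin 2), ‖v‖ = 1 →
      ∃ x, ‖x - m‖ = r ∧ x ∈ frontier R ∧ ⟪x - m, v⟫ ≤ 0 := by
  intro v hv
  by_contra hcon
  push_neg at hcon
  -- every contact point has positive inner product with v
  have hpos : ∀ x, ‖x - m‖ = r → x ∈ frontier R → 0 < ⟪x - m, v⟫ := by
    intro x h1 h2
    exact hcon x h1 h2
  have hball : Metric.ball m r ⊆ interior R :=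
    interior_maximal (Metric.ball_subset_closedBall.trans hsub) isOpen_ball
  -- the closed "back" half-sphere is in the interior
  set A : Set (EuclideanSpace ℝ (Fin 2)) :=
    Metric.sphere m r ∩ {x | ⟪x - m, v⟫ ≤ 0} with hA
  have hAint : A ⊆ interior R := by
    rintro x ⟨hx1, hx2⟩
    have hxR : x ∈ R := hsub (Metric.sphere_subset_closedBall hx1)
    by_contra hxi
    have hxf : x ∈ frontier R := by
      rw [hR.isClosed.frontier_eq]; exact ⟨hxR, hxi⟩
    have := hpos x (by simpa [mem_sphere_iff_norm] using hx1) hxf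
    exact absurd hx2 (not_le.2 this)
  have hAcomp : IsCompact A := by
    apply (isCompact_sphere m r).inter_right
    exact isClosed_le (Continuous.inner (continuous_id.sub continuous_const) continuous_const) continuous_const
  obtain ⟨ρ, hρ, hthick⟩ :=
    hAcomp.exists_thickening_subset_open isOpen_interior hAint
  set ε : ℝ := min (ρ / 4) (r / 2) with hε
  have hε0 : 0 < ε := lt_min (by linarith) (by linarith)
  have hερ : ε ≤ ρ / 4 := min_le_left _ _
  have hεr : ε ≤ r / 2 := min_le_right _ _
  -- the shifted sphere is in the interior
  have hsphint : Metric.sphere (m - ε • v) r ⊆ interior R := by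
    intro x hx
    set u := x - (m - ε • v) with hu
    have hun : ‖u‖ = r := by simpa [hu, mem_sphere_iff_norm] using hx
    set c := ⟪u, v⟫ with hc
    have hcr : |c| ≤ r := by
      calc |c| ≤ ‖u‖ * ‖v‖ := abs_real_inner_le_norm u v
        _ = r := by rw [hun, hv, mul_one]
    by_cases hcase : ε / 2 < c
    · -- forward cap: point is in the open ball
      apply hball
      have hxm : x - m = u - ε • v := by rw [hu]; abel
      have hnsq : ‖x - m‖ ^ 2 = r ^ 2 - 2 * ε * c + ε ^ 2 := by
        rw [hxm, @norm_sub_sq_real, hun, real_inner_smul_right, norm_smul,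
          Real.norm_eq_abs, abs_of_nonneg hε0.le, hv, mul_one, ← hc]
        ring
      have hlt : ‖x - m‖ ^ 2 < r ^ 2 := by rw [hnsq]; nlinarith
      have : ‖x - m‖ < r := by nlinarith [norm_nonneg (x - m)]
      simpa [mem_ball, dist_eq_norm] using this
    · push_neg at hcase
      apply hthick
      rw [Metric.mem_thickening_iff]
      by_cases hc0 : c ≤ 0
      · refine ⟨m + u, ⟨?_, ?_⟩, ?_⟩
        · show ‖m + u - m‖ = r
          rwa [add_sub_cancel_left]
        · show ⟪m + u - m, v⟫ ≤ 0
          rwa [add_sub_cancel_left]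
        have : x - (m + u) = -(ε • v) := by rw [hu]; abel
        rw [dist_eq_norm, this, norm_neg, norm_smul, Real.norm_eq_abs,
          abs_of_nonneg hε0.le, hv, mul_one]
        linarith
      · push_neg at hc0
        set w := u - c • v with hw
        have hwv : ⟪w, v⟫ = 0 := by
          rw [hw, inner_sub_left, real_inner_smul_left, real_inner_self_eq_norm_sq,
            hv]
          ring
        have hwn : ‖w‖ ^ 2 = r ^ 2 - c ^ 2 := by
          rw [hw, @norm_sub_sq_real, hun, real_inner_smul_right, norm_smul,
            Real.norm_eq_abs, hv, mul_one, ← hc]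
          rw [sq_abs]; ring
        have hcsmall : c ≤ r / 4 := by
          have : ε / 2 ≤ r / 4 := by linarith
          linarith
        have hwpos : 0 < ‖w‖ := by
          have : 0 < ‖w‖ ^ 2 := by rw [hwn]; nlinarith
          nlinarith [norm_nonneg w]
        have hwler : ‖w‖ ≤ r := by nlinarith [norm_nonneg w]
        refine ⟨m + (r / ‖w‖) • w, ⟨?_, ?_⟩, ?_⟩
        · simp only [mem_sphere_iff_norm, add_sub_cancel_left, norm_smul,
            Real.norm_eq_abs, abs_of_nonneg (div_nonneg hr.le hwpos.le)]
          field_simp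
        · simp only [Set.mem_setOf_eq, add_sub_cancel_left, real_inner_smul_left, hwv,
            mul_zero, le_refl]
        · have hdecomp : x - (m + (r / ‖w‖) • w) = (u - w) + (w - (r / ‖w‖) • w) - ε • v := by
            rw [hu]; abel
          have h1 : ‖u - w‖ = c := by
            rw [hw]
            simp [norm_smul, Real.norm_eq_abs, hv, abs_of_nonneg hc0.le]
          have h2 : ‖w - (r / ‖w‖) • w‖ = r - ‖w‖ := by
            have : w - (r / ‖w‖) • w = (1 - r / ‖w‖) • w := by
              rw [sub_smul, one_smul]
            rw [this, norm_smul, Real.norm_eq_abs]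
            have hge : 1 ≤ r / ‖w‖ := (one_le_div hwpos).2 hwler
            rw [abs_of_nonpos (by linarith), neg_sub, sub_mul, one_mul,
              div_mul_cancel₀ _ hwpos.ne']
          have h3 : r - ‖w‖ ≤ c ^ 2 / r := by
            have hww : ‖w‖ ^ 2 ≤ ‖w‖ * r := by
              rw [sq]; exact mul_le_mul_of_nonneg_left hwler (norm_nonneg w)
            rw [le_div_iff₀ hr]
            have hexpand : (r - ‖w‖) * r = r ^ 2 - ‖w‖ * r := by ring
            rw [hexpand]
            linarith [hwn]
          have hcle : c ≤ ε / 2 := hcase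
          calc dist x (m + (r / ‖w‖) • w)
              = ‖(u - w) + (w - (r / ‖w‖) • w) - ε • v‖ := by rw [dist_eq_norm, hdecomp]
            _ ≤ ‖(u - w) + (w - (r / ‖w‖) • w)‖ + ‖ε • v‖ := norm_sub_le _ _
            _ ≤ ‖u - w‖ + ‖w - (r / ‖w‖) • w‖ + ‖ε • v‖ := by
                gcongr; exact norm_add_le _ _
            _ = c + (r - ‖w‖) + ε := by
                rw [h1, h2, norm_smul, Real.norm_eq_abs, abs_of_nonneg hε0.le, hv, mul_one]
            _ < ρ := by
                have hc2 : c ^ 2 / r ≤ ε / 8 := by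
                  have hcc : c * c ≤ (ε / 2) * (ε / 2) :=
                    mul_le_mul hcase hcase hc0.le (by linarith)
                  have hee : ε * ε ≤ ε * (r / 2) := mul_le_mul_of_nonneg_left hεr hε0.le
                  rw [div_le_iff₀ hr, sq]
                  linarith
                linarith
  have hcenter : m - ε • v ∈ interior R := by
    apply hball
    rw [mem_ball, dist_eq_norm]
    have : m - ε • v - m = -(ε • v) := by abel
    rw [this, norm_neg, norm_smul, Real.norm_eq_abs, abs_of_nonneg hε0.le, hv, mul_one]
    linarith
  have hballint : Metric.closedBall (m - ε • v) r ⊆ interior R :=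
    closedBall_subset_of_sphere_subset hconv.interior hcenter hsphint
  obtain ⟨δ, hδ, hδsub⟩ :=
    (isCompact_closedBall (m - ε • v) r).exists_cthickening_subset_open
      isOpen_interior hballint
  have : Metric.closedBall (m - ε • v) (δ + r) ⊆ R := by
    rw [← cthickening_closedBall hδ.le hr.le]
    exact hδsub.trans interior_subset
  have := hmax _ _ this
  linarith
end

section
/- Let R ⊆ ℝ² be a compact convex set and suppose B(m,r) with r > 0 is a maximal inscribed disk of R, i.e., B(m,r) ⊆ R and every closed disk contained in R has radius at most r. Then there exist unit vectors v₁, v₂, v₃ ∈ ℝ² such that R is contained in the union of the three slabs {x ∈ ℝ² : −r ≤ ⟨x − m, vᵢ⟩ ≤ r} for i = 1, 2, 3. -/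
/-!
Let `h` be the support function of `R`. Call a unit vector `u` a contact normal if the
supporting line of `R` with outer normal `u` touches `B(m, r)`, i.e. `h u = ⟪m, u⟫ + r`.
If `0` were not in the (compact) convex hull of the contact normals, some `w` would satisfy
`⟪w, u⟫ > δ > 0` for all of them; by compactness of the sphere, the disk can then be moved
slightly in direction `-w` while its radius grows, contradicting maximality. By Carathéodory,
`0` is a convex combination of three contact normals `uᵢ`. For `x ∈ R` this forces
`⟪x - m, uᵢ⟫ ≥ 0` for some `i`, while `⟪x - m, uᵢ⟫ ≤ r` holds for every contact normal.
-/

open scoped RealInnerProductSpace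
open Set Module

section Caratheodory

variable {E : Type*} [AddCommGroup E] [Module ℝ E]

theorem exists_mem_stdSimplex_sum_smul_eq {ι : Type*} [Fintype ι] {z : ι → E} {x : E}
    (hx : x ∈ convexHull ℝ (range z)) : ∃ w ∈ stdSimplex ℝ ι, ∑ i, w i • z i = x := by
  classical
  have hz : range z = Fintype.linearCombination ℝ z '' range fun i => Pi.single i 1 := by
    rw [← range_comp]
    congr 1
    ext i
    simp [Fintype.linearCombination_apply_single]
  rw [hz, ← LinearMap.image_convexHull, convexHull_rangle_single_eq_stdSimplex] at hx
  obtain ⟨w, hw, rfl⟩ := hx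
  exact ⟨w, hw, rfl⟩

variable [Module.Finite ℝ E]

theorem exists_range_subset_mem_convexHull_range {s : Set E} {x : E} {n : ℕ}
    (hn : finrank ℝ E < n) (hx : x ∈ convexHull ℝ s) :
    ∃ z : Fin n → E, range z ⊆ s ∧ x ∈ convexHull ℝ (range z) := by
  rw [convexHull_eq_union] at hx
  simp only [mem_iUnion] at hx
  obtain ⟨t, hts, hind, hxt⟩ := hx
  have : Nonempty t := (convexHull_nonempty_iff.1 ⟨x, hxt⟩).to_subtype
  have hcard : Fintype.card t ≤ Fintype.card (Fin n) := by
    have := hind.card_le_finrank_succ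
    have := Submodule.finrank_le (vectorSpan ℝ (range ((↑) : t → E)))
    simp only [Fintype.card_fin]
    omega
  obtain ⟨e⟩ := Function.Embedding.nonempty_of_card_le hcard
  have hrange : range (Subtype.val ∘ Function.invFun e) = t := by
    rw [range_comp, (Function.invFun_surjective e.injective).range_eq, image_univ,
      Subtype.range_coe]
  exact ⟨_, hrange ▸ hts, hrange ▸ hxt⟩

end Caratheodory

theorem isCompact_convexHull {E : Type*} [NormedAddCommGroup E] [NormedSpace ℝ E]
    [FiniteDimensional ℝ E] {s : Set E} (hs : IsCompact s) : IsCompact (convexHull ℝ s) := by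
  let n := finrank ℝ E + 1
  have hhull : convexHull ℝ s = (fun p : (Fin n → ℝ) × (Fin n → E) => ∑ i, p.1 i • p.2 i) ''
      (stdSimplex ℝ (Fin n) ×ˢ univ.pi fun _ => s) := by
    refine Subset.antisymm (fun x hx => ?_) ?_
    · obtain ⟨z, hzs, hxz⟩ := exists_range_subset_mem_convexHull_range (Nat.lt_succ_self _) hx
      obtain ⟨w, hw, rfl⟩ := exists_mem_stdSimplex_sum_smul_eq hxz
      exact ⟨(w, z), ⟨hw, fun i _ => hzs (mem_range_self i)⟩, rfl⟩
    · rintro _ ⟨⟨w, z⟩, ⟨hw, hz⟩, rfl⟩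
      exact mem_convexHull_of_exists_fintype w z hw.1 hw.2 (fun i => hz i trivial) rfl
  rw [hhull]
  exact ((isCompact_stdSimplex ℝ _).prod (isCompact_univ_pi fun _ => hs)).image (by fun_prop)

section Separation

variable {E : Type*} [NormedAddCommGroup E] [InnerProductSpace ℝ E]

theorem exists_inner_lt_lt_of_notMem [CompleteSpace E] {K : Set E} {x : E} (hconv : Convex ℝ K)
    (hclosed : IsClosed K) (hx : x ∉ K) : ∃ w : E, ∃ c : ℝ, ⟪w, x⟫ < c ∧ ∀ y ∈ K, c < ⟪w, y⟫ := by
  obtain ⟨ℓ, c, hxc, hKc⟩ := geometric_hahn_banach_point_closed hconv hclosed hx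
  refine ⟨(InnerProductSpace.toDual ℝ E).symm ℓ, c, ?_, fun y hy => ?_⟩
  · rwa [InnerProductSpace.toDual_symm_apply]
  · rw [InnerProductSpace.toDual_symm_apply]
    exact hKc y hy

theorem exists_inner_nonneg_of_zero_mem_convexHull {s : Set E} (h : 0 ∈ convexHull ℝ s) (y : E) :
    ∃ u ∈ s, 0 ≤ ⟪y, u⟫ := by
  by_contra! hneg
  have : convexHull ℝ s ⊆ {u | ⟪y, u⟫ < 0} :=
    convexHull_min hneg (convex_halfSpace_lt (innerₛₗ ℝ y).isLinear 0)
  simpa using this h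

end Separation

section SupportFunction

variable {E : Type*} [NormedAddCommGroup E] [InnerProductSpace ℝ E]

noncomputable def supportFunction (R : Set E) (u : E) : ℝ := sSup ((fun x => ⟪x, u⟫) '' R)

variable {R : Set E}

theorem inner_le_supportFunction (hR : IsCompact R) {x : E} (hx : x ∈ R) (u : E) :
    ⟪x, u⟫ ≤ supportFunction R u :=
  le_csSup (hR.image (continuous_id.inner continuous_const)).bddAbove (mem_image_of_mem _ hx)

theorem supportFunction_le (hne : R.Nonempty) {u : E} {a : ℝ} (h : ∀ x ∈ R, ⟪x, u⟫ ≤ a) :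
    supportFunction R u ≤ a :=
  csSup_le (hne.image _) (forall_mem_image.2 h)

theorem continuous_supportFunction (hR : IsCompact R) : Continuous (supportFunction R) :=
  hR.continuous_sSup (f := fun u x => ⟪x, u⟫) (continuous_snd.inner continuous_fst)

theorem inner_add_le_supportFunction (hR : IsCompact R) {c : E} {ρ : ℝ} (hρ : 0 ≤ ρ)
    (hball : Metric.closedBall c ρ ⊆ R) {u : E} (hu : ‖u‖ = 1) :
    ⟪c, u⟫ + ρ ≤ supportFunction R u := by
  have hmem : c + ρ • u ∈ R := hball (by simp [norm_smul, hu, abs_of_nonneg hρ])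
  calc ⟪c, u⟫ + ρ = ⟪c + ρ • u, u⟫ := by
        rw [inner_add_left, real_inner_smul_left, real_inner_self_eq_norm_sq, hu]; ring
    _ ≤ supportFunction R u := inner_le_supportFunction hR hmem u

theorem closedBall_subset_of_inner_add_le_supportFunction [CompleteSpace E]
    (hconv : Convex ℝ R) (hclosed : IsClosed R) (hne : R.Nonempty) {c : E} {ρ : ℝ}
    (h : ∀ u, ‖u‖ = 1 → ⟪c, u⟫ + ρ ≤ supportFunction R u) : Metric.closedBall c ρ ⊆ R := by
  intro y hy
  by_contra hyR
  obtain ⟨w, a, hwy, hwR⟩ := exists_inner_lt_lt_of_notMem hconv hclosed hyR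
  obtain ⟨z, hz⟩ := hne
  have hw : 0 < ‖w‖ := norm_pos_iff.2 fun hw0 => by
    have := hwR z hz
    simp only [hw0, inner_zero_left] at hwy this
    linarith
  set u := -‖w‖⁻¹ • w
  have hu : ‖u‖ = 1 := by simp [u, norm_smul, hw.ne']
  have hinner : ∀ x, ⟪x, u⟫ = -⟪w, x⟫ / ‖w‖ := fun x => by
    simp only [u, real_inner_smul_right, real_inner_comm w x]; ring
  have hsupp : supportFunction R u ≤ -a / ‖w‖ :=
    supportFunction_le ⟨z, hz⟩ fun x hx => by
      rw [hinner]; exact div_le_div_of_nonneg_right (by linarith [hwR x hx]) hw.le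
  have hyu : ⟪y, u⟫ ≤ ⟪c, u⟫ + ρ := by
    have := real_inner_le_norm (y - c) u
    rw [inner_sub_left, hu, mul_one] at this
    linarith [mem_closedBall_iff_norm.1 hy]
  have : -a / ‖w‖ < ⟪y, u⟫ := by
    rw [hinner]; exact div_lt_div_of_pos_right (by linarith) hw
  linarith [h u hu]

end SupportFunction

section InscribedBall

variable {E : Type*} [NormedAddCommGroup E] [InnerProductSpace ℝ E] {R : Set E} {m : E} {r : ℝ}

def contactNormals (R : Set E) (m : E) (r : ℝ) : Set E :=
  {u | ‖u‖ = 1 ∧ supportFunction R u = ⟪m, u⟫ + r}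

theorem inner_sub_le_of_mem_contactNormals (hR : IsCompact R) {u x : E}
    (hu : u ∈ contactNormals R m r) (hx : x ∈ R) : ⟪x - m, u⟫ ≤ r := by
  rw [inner_sub_left]
  linarith [inner_le_supportFunction hR hx u, hu.2]

variable [FiniteDimensional ℝ E]

theorem isCompact_contactNormals (hR : IsCompact R) : IsCompact (contactNormals R m r) :=
  (isCompact_sphere (0 : E) 1).of_isClosed_subset
    ((isClosed_eq continuous_norm continuous_const).inter
      (isClosed_eq (continuous_supportFunction hR) (by fun_prop)))
    fun _ hu => mem_sphere_zero_iff_norm.2 hu.1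

theorem exists_closedBall_subset_of_forall_lt_inner (hR : IsCompact R) (hconv : Convex ℝ R)
    (hr : 0 ≤ r) (hsub : Metric.closedBall m r ⊆ R) {w : E} {δ : ℝ} (hδ : 0 < δ)
    (hw : ∀ u ∈ contactNormals R m r, δ < ⟪w, u⟫) :
    ∃ ε > 0, Metric.closedBall (m - ε • w) (r + ε * δ) ⊆ R := by
  set S := Metric.sphere (0 : E) 1 ∩ {u | ⟪w, u⟫ ≤ δ}
  have hS : IsCompact S :=
    (isCompact_sphere 0 1).inter_right (isClosed_le (by fun_prop) (by fun_prop))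
  have hgap : ∀ u ∈ S, r < supportFunction R u - ⟪m, u⟫ := fun u hu => by
    have hu1 := mem_sphere_zero_iff_norm.1 hu.1
    refine lt_of_le_of_ne ?_ fun hcontact => (hw u ⟨hu1, by linarith⟩).not_ge hu.2
    linarith [inner_add_le_supportFunction hR hr hsub hu1]
  -- directions with `⟪w, u⟫ ≤ δ` miss contact by a margin `a - r`, which `ε` is chosen to preserve
  obtain ⟨a, hra, ha⟩ := hS.exists_forall_le' (f := fun u => supportFunction R u - ⟪m, u⟫)
    ((continuous_supportFunction hR).sub (by fun_prop)).continuousOn hgap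
  set ε := (a - r) / (δ + ‖w‖)
  have hε : 0 < ε := div_pos (by linarith) (by positivity)
  refine ⟨ε, hε, closedBall_subset_of_inner_add_le_supportFunction hconv hR.isClosed
    ⟨m, hsub (Metric.mem_closedBall_self hr)⟩ fun u hu => ?_⟩
  have hexp : ⟪m - ε • w, u⟫ + (r + ε * δ) = ⟪m, u⟫ + r + ε * (δ - ⟪w, u⟫) := by
    rw [inner_sub_left, real_inner_smul_left]; ring
  rw [hexp]
  rcases le_or_gt ⟪w, u⟫ δ with hwu | hwu
  · have hlow : -‖w‖ ≤ ⟪w, u⟫ := by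
      have := abs_real_inner_le_norm w u
      rw [hu, mul_one] at this
      exact neg_le_of_abs_le this
    have : ε * (δ - ⟪w, u⟫) ≤ a - r := by
      calc ε * (δ - ⟪w, u⟫) ≤ ε * (δ + ‖w‖) := by gcongr; linarith
        _ = a - r := div_mul_cancel₀ _ (by positivity)
    linarith [ha u ⟨mem_sphere_zero_iff_norm.2 hu, hwu⟩]
  · nlinarith [inner_add_le_supportFunction hR hr hsub hu]

theorem zero_mem_convexHull_contactNormals (hR : IsCompact R) (hconv : Convex ℝ R) (hr : 0 ≤ r)
    (hsub : Metric.closedBall m r ⊆ R) (hmax : ∀ m' r', Metric.closedBall m' r' ⊆ R → r' ≤ r) :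
    (0 : E) ∈ convexHull ℝ (contactNormals R m r) := by
  by_contra h0
  obtain ⟨w, δ, hw0, hw⟩ := exists_inner_lt_lt_of_notMem (convex_convexHull ℝ _)
    (isCompact_convexHull (isCompact_contactNormals hR)).isClosed h0
  rw [inner_zero_right] at hw0
  obtain ⟨ε, hε, hball⟩ := exists_closedBall_subset_of_forall_lt_inner hR hconv hr hsub hw0
    fun u hu => hw u (subset_convexHull ℝ _ hu)
  linarith [hmax _ _ hball, mul_pos hε hw0]

def slab (m v : E) (r : ℝ) : Set E := {x | -r ≤ ⟪x - m, v⟫ ∧ ⟪x - m, v⟫ ≤ r}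

theorem exists_subset_iUnion_slab {n : ℕ} (hn : finrank ℝ E < n) (hR : IsCompact R)
    (hconv : Convex ℝ R) (hr : 0 ≤ r) (hsub : Metric.closedBall m r ⊆ R)
    (hmax : ∀ m' r', Metric.closedBall m' r' ⊆ R → r' ≤ r) :
    ∃ v : Fin n → E, (∀ i, ‖v i‖ = 1) ∧ R ⊆ ⋃ i, slab m (v i) r := by
  obtain ⟨v, hv, h0⟩ := exists_range_subset_mem_convexHull_range hn
    (zero_mem_convexHull_contactNormals hR hconv hr hsub hmax)
  refine ⟨v, fun i => (hv (mem_range_self i)).1, fun x hx => ?_⟩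
  obtain ⟨_, ⟨i, rfl⟩, hi⟩ := exists_inner_nonneg_of_zero_mem_convexHull h0 (x - m)
  exact mem_iUnion.2 ⟨i, by linarith, inner_sub_le_of_mem_contactNormals hR (hv ⟨i, rfl⟩) hx⟩

end InscribedBall

/-- A compact convex planar region with maximal inscribed disk `B(m, r)` is contained in
the union of three slabs of width `2r` through `m`. -/
theorem convex_subset_three_slabs
    (R : Set (EuclideanSpace ℝ (Fin 2))) (hR : IsCompact R) (hconv : Convex ℝ R)
    (m : EuclideanSpace ℝ (Fin 2)) (r : ℝ) (hr : 0 < r)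
    (hsub : Metric.closedBall m r ⊆ R)
    (hmax : ∀ (m' : EuclideanSpace ℝ (Fin 2)) (r' : ℝ),
      Metric.closedBall m' r' ⊆ R → r' ≤ r) :
    ∃ v₁ v₂ v₃ : EuclideanSpace ℝ (Fin 2), ‖v₁‖ = 1 ∧ ‖v₂‖ = 1 ∧ ‖v₃‖ = 1 ∧
      R ⊆ {x | -r ≤ ⟪x - m, v₁⟫ ∧ ⟪x - m, v₁⟫ ≤ r} ∪
          {x | -r ≤ ⟪x - m, v₂⟫ ∧ ⟪x - m, v₂⟫ ≤ r} ∪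
          {x | -r ≤ ⟪x - m, v₃⟫ ∧ ⟪x - m, v₃⟫ ≤ r} := by
  obtain ⟨v, hv, hcover⟩ :=
    exists_subset_iUnion_slab (n := 3) (by simp) hR hconv hr.le hsub hmax
  refine ⟨v 0, v 1, v 2, hv 0, hv 1, hv 2, fun x hx => ?_⟩
  obtain ⟨i, hi⟩ := mem_iUnion.1 (hcover hx)
  fin_cases i
  exacts [Or.inl (Or.inl hi), Or.inl (Or.inr hi), Or.inr hi]
end

section
/- For all real numbers a and b with 0 < a ≤ b, it holds that a·log₂(a) + b·log₂(b) − (a+b)·log₂(a+b) < −a. -/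
/-- Potential-function inequality for merging two quadtree components: for
`0 < a ≤ b`, `a·log₂ a + b·log₂ b − (a+b)·log₂(a+b) < −a`. -/
theorem merge_potential_inequality (a b : ℝ) (ha : 0 < a) (hab : a ≤ b) :
    a * Real.logb 2 a + b * Real.logb 2 b - (a + b) * Real.logb 2 (a + b) < -a := by
  have hb : 0 < b := lt_of_lt_of_le ha hab
  have h1 : Real.logb 2 b < Real.logb 2 (a + b) :=
    Real.logb_lt_logb one_lt_two hb (by linarith)
  have h2 : Real.logb 2 (2 * a) ≤ Real.logb 2 (a + b) :=
    Real.logb_le_logb_of_le one_lt_two (by linarith) (by linarith)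
  have h3 : Real.logb 2 (2 * a) = 1 + Real.logb 2 a := by
    rw [Real.logb_mul (by norm_num) (ne_of_gt ha), Real.logb_self_eq_one one_lt_two]
  nlinarith [mul_lt_mul_of_pos_left h1 hb, mul_le_mul_of_nonneg_left h2 ha.le]
end

section
/- For all real numbers N and n with 0 < N ≤ n, it holds that (N+1)·(log₂(n+1) − log₂(N+1)) − N·(log₂(n) − log₂(N)) ≤ log₂(n+1). -/
/-- Potential-function inequality for insertion into an existing quadtree component:
for `0 < N ≤ n`, `(N+1)(log₂(n+1) − log₂(N+1)) − N(log₂ n − log₂ N) ≤ log₂(n+1)`. -/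
theorem insert_potential_inequality (N n : ℝ) (hN : 0 < N) (hNn : N ≤ n) :
    (N + 1) * (Real.logb 2 (n + 1) - Real.logb 2 (N + 1)) -
      N * (Real.logb 2 n - Real.logb 2 N) ≤ Real.logb 2 (n + 1) := by
  have hn : 0 < n := lt_of_lt_of_le hN hNn
  have hdiv : (n + 1) / n ≤ (N + 1) / N := by
    rw [div_le_div_iff₀ hn hN]; nlinarith
  have h1 : Real.logb 2 (n + 1) - Real.logb 2 n ≤
      Real.logb 2 (N + 1) - Real.logb 2 N := by
    rw [← Real.logb_div (by linarith) hn.ne', ← Real.logb_div (by linarith) hN.ne']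
    gcongr
    · norm_num
  have h2 : 0 ≤ Real.logb 2 (N + 1) := Real.logb_nonneg one_lt_two (by linarith)
  nlinarith [mul_le_mul_of_nonneg_left h1 hN.le]
end

section
/- For all real numbers N and n with 2 ≤ N ≤ n, it holds that (N−1)·(log₂(n−1) − log₂(N−1)) − N·(log₂(n) − log₂(N)) ≤ 3. -/
/-!
Split the change of potential as
`(N - 1)(log₂(n-1) - log₂ n) - (log₂ n - log₂ N) + (N - 1)(log₂ N - log₂(N - 1))`.
The first two terms are nonpositive by monotonicity of `log₂`, and by `log x ≤ x - 1` the last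
one is at most `1 / log 2 < 3`.
-/

open Real

lemma sub_one_mul_log_div_sub_one_le_one {x : ℝ} (hx : 1 < x) :
    (x - 1) * log (x / (x - 1)) ≤ 1 := by
  have hx₁ : 0 < x - 1 := by linarith
  calc (x - 1) * log (x / (x - 1)) ≤ (x - 1) * (x / (x - 1) - 1) := by
        gcongr
        exact log_le_sub_one_of_pos (by positivity)
    _ = 1 := by field_simp; ring

lemma sub_one_mul_logb_sub_logb_sub_one_le {b x : ℝ} (hb : 1 < b) (hx : 1 < x) :
    (x - 1) * (logb b x - logb b (x - 1)) ≤ 1 / log b := by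
  have hlogb : 0 < log b := log_pos hb
  rw [← logb_div (by linarith) (by linarith), ← log_div_log, mul_div_assoc']
  gcongr
  exact sub_one_mul_log_div_sub_one_le_one hx

lemma one_div_log_two_lt_three : 1 / log 2 < 3 := by
  have := log_two_gt_d9
  rw [div_lt_iff₀ (by linarith)]
  linarith

/-- Potential-function inequality for deletion from a quadtree component:
for `2 ≤ N ≤ n`, `(N−1)(log₂(n−1) − log₂(N−1)) − N(log₂ n − log₂ N) ≤ 3`. -/
theorem delete_potential_inequality (N n : ℝ) (hN : 2 ≤ N) (hNn : N ≤ n) :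
    (N - 1) * (Real.logb 2 (n - 1) - Real.logb 2 (N - 1)) -
      N * (Real.logb 2 n - Real.logb 2 N) ≤ 3 := by
  have h_pred : logb 2 (n - 1) ≤ logb 2 n :=
    logb_le_logb_of_le one_lt_two (by linarith) (by linarith)
  have h_mono : logb 2 N ≤ logb 2 n := logb_le_logb_of_le one_lt_two (by linarith) hNn
  have h_step := sub_one_mul_logb_sub_logb_sub_one_le one_lt_two (by linarith : 1 < N)
  have h_split : (N - 1) * (logb 2 (n - 1) - logb 2 (N - 1)) - N * (logb 2 n - logb 2 N) =
      (N - 1) * (logb 2 (n - 1) - logb 2 n) - (logb 2 n - logb 2 N) +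
        (N - 1) * (logb 2 N - logb 2 (N - 1)) := by ring
  have h_neg : (N - 1) * (logb 2 (n - 1) - logb 2 n) ≤ 0 :=
    mul_nonpos_of_nonneg_of_nonpos (by linarith) (by linarith)
  linarith [one_div_log_two_lt_three]
end
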